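/- Let Q be a quiver with vertex set I, S = kI, and let k\bar{Q} be the path algebra of the doubled quiver with the double Poisson bracket determined by {{x, x*}} = e_{s(x)} ⊗ e_{t(x)}, {{x*, x}} = -e_{t(x)} ⊗ e_{s(x)} for each arrow x of Q, all other brackets of generators zero. Then this is a double Poisson bracket (vanishing triple bracket), and the elements δ_i := e_i (Σ_{x ∈ Q_1} [x, x*]) e_i satisfy {{δ_i, a}} = a e_i ⊗ e_i - e_i ⊗ e_i a for every a ∈ k\bar{Q}, i.e. they define a noncommutative Hamiltonian action (noncommutative moment map). -/

import Mathlib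

/-!
Both claims reduce to generators because both are Leibniz rules for the outer bimodule
structure. The triple bracket of a double bracket is a derivation in its last argument and
is cyclically symmetric, so it vanishes once it vanishes on triples of generators; there every
`{{g, h}}` lies in `S ⊗ S`, which `{{f, -}} ⊗ 1` kills by `S`-linearity. Likewise
`a ↦ {{δ_i, a}}` and `a ↦ a e_i ⊗ e_i - e_i ⊗ e_i a` are both derivations. Since
`{{e_i, -}} = 0`, `{{δ_i, a}} = (1 ⊗ e_i) {{δ, a}} (e_i ⊗ 1)` with
`δ = Σ [x, x*]`, and for a generator `g = e_l g e_m` one computes `{{δ, g}} = g ⊗ e_m - e_l ⊗ g`.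
-/

namespace Stmt8

open TensorProduct

variable {R A : Type*} [CommRing R] [Ring A] [Algebra R A]

/-- The cyclic permutation τ_(123) on A⊗A⊗A : x⊗y⊗z ↦ z⊗x⊗y. -/
noncomputable def cyc3 (R A : Type*) [CommRing R] [Ring A] [Algebra R A] :
    (A ⊗[R] A) ⊗[R] A →ₗ[R] (A ⊗[R] A) ⊗[R] A :=
  ((TensorProduct.assoc R A A A).symm.toLinearMap).comp
    (TensorProduct.comm R (A ⊗[R] A) A).toLinearMap

/-- The triple bracket associated to a binary operation `D`:
{{a,b,c}} = {{a,{{b,c}}}}_L + τ_(123){{b,{{c,a}}}}_L + τ_(132){{c,{{a,b}}}}_L,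
where {{a,u⊗v}}_L = {{a,u}}⊗v. -/
noncomputable def tripleBr (D : A →ₗ[R] A →ₗ[R] A ⊗[R] A) (a b c : A) :
    (A ⊗[R] A) ⊗[R] A :=
  LinearMap.rTensor A (D a) (D b c)
    + cyc3 R A (LinearMap.rTensor A (D b) (D c a))
    + cyc3 R A (cyc3 R A (LinearMap.rTensor A (D c) (D a b)))

/-- The single bracket {a,b} = m({{a,b}}) associated to `D`. -/
noncomputable def sb (D : A →ₗ[R] A →ₗ[R] A ⊗[R] A) (a b : A) : A :=
  LinearMap.mul' R A (D a b)

lemma cyc3_tmul (x y z : A) : cyc3 R A ((x ⊗ₜ[R] y) ⊗ₜ[R] z) = (z ⊗ₜ[R] x) ⊗ₜ[R] y := rfl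

lemma cyc3_mul (x y : (A ⊗[R] A) ⊗[R] A) : cyc3 R A (x * y) = cyc3 R A x * cyc3 R A y :=
  map_mul ((Algebra.TensorProduct.assoc R R R A A A).symm.toAlgHom.comp
    (Algebra.TensorProduct.comm R (A ⊗[R] A) A).toAlgHom) x y

lemma cyc3_cyc3_cyc3 (z : (A ⊗[R] A) ⊗[R] A) : cyc3 R A (cyc3 R A (cyc3 R A z)) = z := by
  induction z using TensorProduct.induction_on with
  | zero => simp
  | add x y hx hy => simp only [map_add, hx, hy]
  | tmul x c =>
    induction x using TensorProduct.induction_on with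
    | zero => simp
    | add x y hx hy => simp only [add_tmul, map_add, hx, hy]
    | tmul a b => rfl

lemma tripleBr_add_right (D : A →ₗ[R] A →ₗ[R] A ⊗[R] A) (a b c c' : A) :
    tripleBr D a b (c + c') = tripleBr D a b c + tripleBr D a b c' := by
  simp only [tripleBr, map_add, LinearMap.rTensor_add, LinearMap.add_apply]
  abel

lemma cyc3_tripleBr (D : A →ₗ[R] A →ₗ[R] A ⊗[R] A) (a b c : A) :
    cyc3 R A (tripleBr D a b c) = tripleBr D c a b := by
  rw [tripleBr, tripleBr, map_add, map_add, cyc3_cyc3_cyc3]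
  abel

noncomputable def outerActLeft (w : A ⊗[R] A) : A →ₗ[R] A ⊗[R] A :=
  (LinearMap.mulRight R w).comp Algebra.TensorProduct.includeLeft.toLinearMap

noncomputable def outerActRight (w : A ⊗[R] A) : A →ₗ[R] A ⊗[R] A :=
  (LinearMap.mulLeft R w).comp Algebra.TensorProduct.includeRight.toLinearMap

@[simp] lemma outerActLeft_apply (w : A ⊗[R] A) (u : A) :
    outerActLeft w u = (u ⊗ₜ[R] 1) * w := rfl

@[simp] lemma outerActRight_apply (w : A ⊗[R] A) (u : A) :
    outerActRight w u = w * (1 ⊗ₜ[R] u) := rfl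

lemma outerActLeft_add (w w' : A ⊗[R] A) :
    outerActLeft (w + w') = outerActLeft w + outerActLeft w' := by
  ext u; simp [mul_add]

lemma outerActRight_add (w w' : A ⊗[R] A) :
    outerActRight (w + w') = outerActRight w + outerActRight w' := by
  ext u; simp [add_mul]

noncomputable def outerAd (w : A ⊗[R] A) : A →ₗ[R] A ⊗[R] A :=
  outerActLeft w - outerActRight w

/-- The Leibniz rule for the outer bimodule structure `b • w • c = (b ⊗ 1) w (1 ⊗ c)` of `A ⊗ A`. -/
def IsOuterDerivation (φ : A →ₗ[R] A ⊗[R] A) : Prop :=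
  ∀ b c, φ (b * c) = φ b * (1 ⊗ₜ c) + (b ⊗ₜ 1) * φ c

structure IsDoubleBracket (D : A →ₗ[R] A →ₗ[R] A ⊗[R] A) : Prop where
  isOuterDerivation : ∀ a, IsOuterDerivation (D a)
  antisymm : ∀ a b, D a b = -TensorProduct.comm R A A (D b a)

lemma isOuterDerivation_outerAd (w : A ⊗[R] A) : IsOuterDerivation (outerAd w) := by
  intro b c
  have hl : (b * c) ⊗ₜ[R] (1 : A) = (b ⊗ₜ 1) * (c ⊗ₜ 1) := by simp
  have hr : (1 : A) ⊗ₜ[R] (b * c) = (1 ⊗ₜ b) * (1 ⊗ₜ c) := by simp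
  simp only [outerAd, LinearMap.sub_apply, outerActLeft_apply, outerActRight_apply, hl, hr]
  noncomm_ring

namespace IsOuterDerivation

variable {φ ψ : A →ₗ[R] A ⊗[R] A}

lemma map_one (hφ : IsOuterDerivation φ) : φ 1 = 0 := by
  simpa [← Algebra.TensorProduct.one_def] using hφ 1 1

lemma map_algebraMap (hφ : IsOuterDerivation φ) (r : R) : φ (algebraMap R A r) = 0 := by
  rw [Algebra.algebraMap_eq_smul_one, map_smul, hφ.map_one, smul_zero]

lemma eq_of_eqOn (hφ : IsOuterDerivation φ) (hψ : IsOuterDerivation ψ) {s : Set A}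
    (hs : Algebra.adjoin R s = ⊤) (h : Set.EqOn φ ψ s) : φ = ψ := by
  ext a
  induction (hs ▸ Algebra.mem_top : a ∈ Algebra.adjoin R s) using Algebra.adjoin_induction with
  | mem x hx => exact h hx
  | algebraMap r => rw [hφ.map_algebraMap, hψ.map_algebraMap]
  | add x y _ _ hx hy => rw [map_add, map_add, hx, hy]
  | mul x y _ _ hx hy => rw [hφ, hψ, hx, hy]

end IsOuterDerivation

section rTensor

variable (φ : A →ₗ[R] A ⊗[R] A) (Y : A ⊗[R] A) (c : A)

lemma rTensor_mul_one_tmul :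
    φ.rTensor A (Y * (1 ⊗ₜ c)) = φ.rTensor A Y * ((1 ⊗ₜ 1) ⊗ₜ c) := by
  induction Y using TensorProduct.induction_on with
  | zero => simp
  | add x y hx hy => simp only [add_mul, map_add, hx, hy]
  | tmul u v => simp [Algebra.TensorProduct.tmul_mul_tmul, ← Algebra.TensorProduct.one_def]

lemma rTensor_one_tmul_mul :
    φ.rTensor A ((1 ⊗ₜ c) * Y) = ((1 ⊗ₜ 1) ⊗ₜ c) * φ.rTensor A Y := by
  induction Y using TensorProduct.induction_on with
  | zero => simp
  | add x y hx hy => simp only [mul_add, map_add, hx, hy]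
  | tmul u v => simp [Algebra.TensorProduct.tmul_mul_tmul, ← Algebra.TensorProduct.one_def]

variable {φ}

lemma IsOuterDerivation.rTensor_tmul_one_mul (hφ : IsOuterDerivation φ) :
    φ.rTensor A ((c ⊗ₜ 1) * Y)
      = (outerActRight (φ c)).rTensor A Y + ((c ⊗ₜ 1) ⊗ₜ 1) * φ.rTensor A Y := by
  induction Y using TensorProduct.induction_on with
  | zero => simp
  | add x y hx hy => simp only [mul_add, map_add, hx, hy]; abel
  | tmul u v => simp [Algebra.TensorProduct.tmul_mul_tmul, hφ c u, add_tmul]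

lemma IsOuterDerivation.rTensor_mul_tmul_one (hφ : IsOuterDerivation φ) :
    φ.rTensor A (Y * (c ⊗ₜ 1))
      = φ.rTensor A Y * ((1 ⊗ₜ c) ⊗ₜ 1) + (outerActLeft (φ c)).rTensor A Y := by
  induction Y using TensorProduct.induction_on with
  | zero => simp
  | add x y hx hy => simp only [add_mul, map_add, hx, hy]; abel
  | tmul u v => simp [Algebra.TensorProduct.tmul_mul_tmul, hφ u c, add_tmul]

/-- On pure tensors both sides are `(p ⊗ q u) ⊗ v` for `P = p ⊗ q`, `Q = u ⊗ v`. -/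
lemma cyc3_rTensor_outerActLeft_comm (P Q : A ⊗[R] A) :
    cyc3 R A ((outerActLeft Q).rTensor A (TensorProduct.comm R A A P))
      = (outerActRight P).rTensor A Q := by
  induction P using TensorProduct.induction_on with
  | zero => simp [outerActRight]
  | add P₁ P₂ h₁ h₂ =>
    rw [outerActRight_add, LinearMap.rTensor_add, LinearMap.add_apply, map_add, map_add, map_add,
      h₁, h₂]
  | tmul p q =>
    induction Q using TensorProduct.induction_on with
    | zero => simp [outerActLeft]
    | add Q₁ Q₂ h₁ h₂ =>
      rw [outerActLeft_add, LinearMap.rTensor_add, LinearMap.add_apply, map_add, map_add, h₁, h₂]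
    | tmul u v => simp [Algebra.TensorProduct.tmul_mul_tmul, cyc3_tmul]

end rTensor

namespace IsDoubleBracket

variable {D : A →ₗ[R] A →ₗ[R] A ⊗[R] A} (hD : IsDoubleBracket D)
include hD

lemma map_one : D 1 = 0 := by
  ext a
  rw [hD.antisymm, (hD.isOuterDerivation a).map_one, map_zero, neg_zero, LinearMap.zero_apply]

lemma map_algebraMap (r : R) : D (algebraMap R A r) = 0 := by
  rw [Algebra.algebraMap_eq_smul_one, map_smul, hD.map_one, smul_zero]

lemma map_mul_apply (a b c : A) :
    D (b * c) a = D b a * (c ⊗ₜ 1) + (1 ⊗ₜ b) * D c a := by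
  have hcomm : ∀ x y : A ⊗[R] A,
      TensorProduct.comm R A A (x * y) = TensorProduct.comm R A A x * TensorProduct.comm R A A y :=
    map_mul (Algebra.TensorProduct.comm R A A)
  rw [hD.antisymm, hD.isOuterDerivation a b c, map_add, hcomm, hcomm, comm_tmul, comm_tmul,
    hD.antisymm b, hD.antisymm c]
  simp only [neg_add, neg_mul, mul_neg]

lemma rTensor_map_mul (c c' : A) (Y : A ⊗[R] A) :
    (D (c * c')).rTensor A Y
      = (D c).rTensor A Y * ((c' ⊗ₜ 1) ⊗ₜ 1) + ((1 ⊗ₜ c) ⊗ₜ 1) * (D c').rTensor A Y := by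
  induction Y using TensorProduct.induction_on with
  | zero => simp
  | add x y hx hy => simp only [map_add, hx, hy, add_mul, mul_add]; abel
  | tmul u v => simp [Algebra.TensorProduct.tmul_mul_tmul, hD.map_mul_apply u c c', add_tmul]

lemma apply_mul_mul {p q : A} (hp : D p = 0) (hq : D q = 0) (s a : A) :
    D (p * s * q) a = (1 ⊗ₜ p) * D s a * (q ⊗ₜ 1) := by
  simp [hD.map_mul_apply, hp, hq]

lemma tripleBr_algebraMap_right (a b : A) (r : R) : tripleBr D a b (algebraMap R A r) = 0 := by
  simp [tripleBr, hD.map_algebraMap, (hD.isOuterDerivation b).map_algebraMap]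

lemma tripleBr_mul_right (a b c c' : A) :
    tripleBr D a b (c * c')
      = tripleBr D a b c * ((1 ⊗ₜ 1) ⊗ₜ c') + ((c ⊗ₜ 1) ⊗ₜ 1) * tripleBr D a b c' := by
  have e₁ : (D a).rTensor A (D b (c * c'))
      = (D a).rTensor A (D b c) * ((1 ⊗ₜ 1) ⊗ₜ c')
        + ((outerActRight (D a c)).rTensor A (D b c')
          + ((c ⊗ₜ 1) ⊗ₜ 1) * (D a).rTensor A (D b c')) := by
    rw [hD.isOuterDerivation b c c', map_add, rTensor_mul_one_tmul,
      (hD.isOuterDerivation a).rTensor_tmul_one_mul]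
  have e₂ : cyc3 R A ((D b).rTensor A (D (c * c') a))
      = cyc3 R A ((D b).rTensor A (D c a)) * ((1 ⊗ₜ 1) ⊗ₜ c')
        + cyc3 R A ((outerActLeft (D b c')).rTensor A (D c a))
        + ((c ⊗ₜ 1) ⊗ₜ 1) * cyc3 R A ((D b).rTensor A (D c' a)) := by
    rw [hD.map_mul_apply, map_add, (hD.isOuterDerivation b).rTensor_mul_tmul_one,
      rTensor_one_tmul_mul, map_add, map_add, cyc3_mul, cyc3_mul, cyc3_tmul, cyc3_tmul]
  have e₃ : cyc3 R A (cyc3 R A ((D (c * c')).rTensor A (D a b)))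
      = cyc3 R A (cyc3 R A ((D c).rTensor A (D a b))) * ((1 ⊗ₜ 1) ⊗ₜ c')
        + ((c ⊗ₜ 1) ⊗ₜ 1) * cyc3 R A (cyc3 R A ((D c').rTensor A (D a b))) := by
    rw [hD.rTensor_map_mul, map_add, map_add]
    simp only [cyc3_mul, cyc3_tmul]
  -- the two terms in which `{{a, c}}` and `{{b, c'}}` meet cancel by antisymmetry
  have cancel : cyc3 R A ((outerActLeft (D b c')).rTensor A (D c a))
      = -(outerActRight (D a c)).rTensor A (D b c') := by
    rw [hD.antisymm c, map_neg, map_neg, cyc3_rTensor_outerActLeft_comm]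
  rw [tripleBr, tripleBr, tripleBr, e₁, e₂, e₃, cancel]
  noncomm_ring

lemma tripleBr_eq_zero_of_forall_mem {s : Set A} (hs : Algebra.adjoin R s = ⊤) {a b : A}
    (h : ∀ c ∈ s, tripleBr D a b c = 0) (c : A) : tripleBr D a b c = 0 := by
  induction (hs ▸ Algebra.mem_top : c ∈ Algebra.adjoin R s) using Algebra.adjoin_induction with
  | mem x hx => exact h x hx
  | algebraMap r => exact hD.tripleBr_algebraMap_right a b r
  | add x y _ _ hx hy => rw [tripleBr_add_right, hx, hy, add_zero]
  | mul x y _ _ hx hy => rw [hD.tripleBr_mul_right, hx, hy, zero_mul, mul_zero, add_zero]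

theorem tripleBr_eq_zero {s : Set A} (hs : Algebra.adjoin R s = ⊤)
    (h : ∀ a ∈ s, ∀ b ∈ s, ∀ c ∈ s, tripleBr D a b c = 0) (a b c : A) :
    tripleBr D a b c = 0 := by
  have h₁ : ∀ a ∈ s, ∀ b ∈ s, ∀ c, tripleBr D a b c = 0 := fun a ha b hb =>
    hD.tripleBr_eq_zero_of_forall_mem hs (h a ha b hb)
  have h₂ : ∀ a, ∀ b ∈ s, ∀ c, tripleBr D a b c = 0 := fun a b hb =>
    hD.tripleBr_eq_zero_of_forall_mem hs fun c hc => by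
      rw [← cyc3_tripleBr, h₁ b hb c hc, map_zero]
  exact hD.tripleBr_eq_zero_of_forall_mem hs (fun c hc => by
    rw [← cyc3_tripleBr, h₂ b c hc, map_zero]) c

end IsDoubleBracket

section Corner

variable {I : Type*} [DecidableEq I] {E : I → A} (hE : OrthogonalIdempotents E)
  {x : A} {l m : I} (hx : E l * x * E m = x) (i : I)
include hE hx

lemma corner_mul_eq_ite : x * E i = if m = i then x else 0 := by
  rw [← hx, mul_assoc, hE.mul_eq]
  split_ifs with h
  · rw [h]
  · rw [mul_zero]

lemma mul_corner_eq_ite : E i * x = if i = l then x else 0 := by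
  rw [← hx, ← mul_assoc, ← mul_assoc, hE.mul_eq]
  split_ifs with h
  · rw [h]
  · rw [zero_mul, zero_mul]

lemma outerAd_tmul_self_eq_of_corner :
    outerAd (E i ⊗ₜ[R] E i) x = (1 ⊗ₜ E i) * (x ⊗ₜ E m - E l ⊗ₜ x) * (E i ⊗ₜ 1) := by
  simp only [outerAd, LinearMap.sub_apply, outerActLeft_apply, outerActRight_apply, mul_sub,
    sub_mul, Algebra.TensorProduct.tmul_mul_tmul, one_mul, mul_one,
    corner_mul_eq_ite hE hx, mul_corner_eq_ite hE hx, hE.mul_eq]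
  by_cases hm : m = i <;> by_cases hl : i = l <;> subst_vars <;> simp [Ne.symm, *]

end Corner

section DoubledQuiver

variable {I Ar : Type*} [Fintype Ar] [DecidableEq Ar] {src tgt : Ar → I} {E : I → A}
  {X Xs : Ar → A} {D : A →ₗ[R] A →ₗ[R] A ⊗[R] A}

lemma IsDoubleBracket.apply_sum_commutator_arrow (hD : IsDoubleBracket D)
    (hXl : ∀ e, E (tgt e) * X e = X e) (hXr : ∀ e, X e * E (src e) = X e)
    (hXX : ∀ e f, D (X e) (X f) = 0)
    (hXsX : ∀ e f, D (Xs e) (X f) = if e = f then -(E (tgt e) ⊗ₜ[R] E (src e)) else 0) (f : Ar) :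
    D (∑ e, (X e * Xs e - Xs e * X e)) (X f) = X f ⊗ₜ E (src f) - E (tgt f) ⊗ₜ X f := by
  simp [hD.map_mul_apply, hXX, hXsX, mul_ite, ite_mul, Finset.sum_sub_distrib,
    Algebra.TensorProduct.tmul_mul_tmul, hXl, hXr]
  abel

lemma IsDoubleBracket.apply_sum_commutator_reversedArrow (hD : IsDoubleBracket D)
    (hXsl : ∀ e, E (src e) * Xs e = Xs e) (hXsr : ∀ e, Xs e * E (tgt e) = Xs e)
    (hXXs : ∀ e f, D (X e) (Xs f) = if e = f then E (src e) ⊗ₜ[R] E (tgt e) else 0)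
    (hXsXs : ∀ e f, D (Xs e) (Xs f) = 0) (f : Ar) :
    D (∑ e, (X e * Xs e - Xs e * X e)) (Xs f) = Xs f ⊗ₜ E (tgt f) - E (src f) ⊗ₜ Xs f := by
  simp [hD.map_mul_apply, hXXs, hXsXs, mul_ite, ite_mul, Finset.sum_sub_distrib,
    Algebra.TensorProduct.tmul_mul_tmul, hXsl, hXsr]

end DoubledQuiver

theorem doubledQuiver_hamiltonian_general
    {k : Type*} [Field k] {Av : Type*} [Ring Av] [Algebra k Av]
    {I : Type*} [DecidableEq I]
    {Ar : Type*} [Fintype Ar] [DecidableEq Ar]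
    (src tgt : Ar → I)
    -- the orthogonal idempotents e_i, summing to 1
    (E : I → Av) (hE : ∀ i j, E i * E j = if i = j then E i else 0)
    -- the arrows x and the reversed arrows x* of the doubled quiver
    (X Xs : Ar → Av)
    (hX : ∀ e, E (tgt e) * X e * E (src e) = X e)
    (hXs : ∀ e, E (src e) * Xs e * E (tgt e) = Xs e)
    -- they generate the path algebra
    (hgen : Algebra.adjoin k (Set.range X ∪ Set.range Xs ∪ Set.range E) = ⊤)
    -- the double bracket
    (D : Av →ₗ[k] Av →ₗ[k] Av ⊗[k] Av)
    (hder : ∀ a b c : Av, D a (b * c) = D a b * (1 ⊗ₜ[k] c) + (b ⊗ₜ[k] 1) * D a c)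
    (hanti : ∀ a b : Av, D a b = - (TensorProduct.comm k Av Av) (D b a))
    -- S-linearity
    (hlin : ∀ (a : Av) (i : I), D a (E i) = 0)
    -- values on generators: {{x, x*}} = e_{s(x)} ⊗ e_{t(x)}, etc.
    (hXXs : ∀ e f, D (X e) (Xs f)
        = if e = f then (E (src e)) ⊗ₜ[k] (E (tgt e)) else 0)
    (hXsX : ∀ e f, D (Xs e) (X f)
        = if e = f then -((E (tgt e)) ⊗ₜ[k] (E (src e))) else 0)
    (hXX : ∀ e f, D (X e) (X f) = 0)
    (hXsXs : ∀ e f, D (Xs e) (Xs f) = 0) :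
    -- this is a double Poisson bracket ...
    (∀ a b c : Av, tripleBr D a b c = 0) ∧
    -- ... and δ_i = e_i (Σ_x [x,x*]) e_i is a noncommutative moment map
    (∀ (i : I) (a : Av),
      D (E i * (∑ e, (X e * Xs e - Xs e * X e)) * E i) a
        = ((a * E i) ⊗ₜ[k] (E i)) - ((E i) ⊗ₜ[k] (E i * a))) := by
  have hD : IsDoubleBracket D := ⟨hder, hanti⟩
  have hE' : OrthogonalIdempotents E := OrthogonalIdempotents.iff_mul_eq.mpr hE
  have hDE : ∀ i, D (E i) = 0 := fun i => by
    ext a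
    rw [hanti, hlin, map_zero, neg_zero, LinearMap.zero_apply]
  refine ⟨hD.tripleBr_eq_zero hgen ?_, fun i a => ?_⟩
  · have hgens : ∀ f, ∀ g ∈ Set.range X ∪ Set.range Xs ∪ Set.range E,
        ∀ h ∈ Set.range X ∪ Set.range Xs ∪ Set.range E, (D f).rTensor Av (D g h) = 0 := by
      rintro f _ ((⟨e, rfl⟩ | ⟨e, rfl⟩) | ⟨i, rfl⟩) _ ((⟨e', rfl⟩ | ⟨e', rfl⟩) | ⟨j, rfl⟩) <;>
        simp [hXX, hXXs, hXsX, hXsXs, hlin, hDE, apply_ite]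
    intro a ha b hb c hc
    simp [tripleBr, hgens _ a ha b hb, hgens _ b hb c hc, hgens _ c hc a ha]
  · have hδ : D (E i * (∑ e, (X e * Xs e - Xs e * X e)) * E i) = outerAd (E i ⊗ₜ E i) := by
      refine (hD.isOuterDerivation _).eq_of_eqOn (isOuterDerivation_outerAd _) hgen ?_
      rintro _ ((⟨f, rfl⟩ | ⟨f, rfl⟩) | ⟨j, rfl⟩) <;>
        rw [hD.apply_mul_mul (hDE i) (hDE i)]
      · rw [outerAd_tmul_self_eq_of_corner hE' (hX f), hD.apply_sum_commutator_arrow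
          (fun e => by simpa using mul_corner_eq_ite hE' (hX e) (tgt e))
          (fun e => by simpa using corner_mul_eq_ite hE' (hX e) (src e)) hXX hXsX]
      · rw [outerAd_tmul_self_eq_of_corner hE' (hXs f), hD.apply_sum_commutator_reversedArrow
          (fun e => by simpa using mul_corner_eq_ite hE' (hXs e) (src e))
          (fun e => by simpa using corner_mul_eq_ite hE' (hXs e) (tgt e)) hXXs hXsXs]
      · rw [outerAd_tmul_self_eq_of_corner hE' (l := j) (m := j) (by simp [hE]), hlin, sub_self,
          mul_zero, zero_mul]
    rw [hδ]
    simp [outerAd, Algebra.TensorProduct.tmul_mul_tmul]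

theorem doubledQuiver_hamiltonian
    {k : Type*} [Field k] {Av : Type*} [Ring Av] [Algebra k Av]
    {I : Type*} [Fintype I] [DecidableEq I]
    {Ar : Type*} [Fintype Ar] [DecidableEq Ar]
    (src tgt : Ar → I)
    -- the orthogonal idempotents e_i, summing to 1
    (E : I → Av) (hE : ∀ i j, E i * E j = if i = j then E i else 0)
    (hEsum : ∑ i, E i = 1)
    -- the arrows x and the reversed arrows x* of the doubled quiver
    (X Xs : Ar → Av)
    (hX : ∀ e, E (tgt e) * X e * E (src e) = X e)
    (hXs : ∀ e, E (src e) * Xs e * E (tgt e) = Xs e)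
    -- they generate the path algebra
    (hgen : Algebra.adjoin k (Set.range X ∪ Set.range Xs ∪ Set.range E) = ⊤)
    -- the double bracket
    (D : Av →ₗ[k] Av →ₗ[k] Av ⊗[k] Av)
    (hder : ∀ a b c : Av, D a (b * c) = D a b * (1 ⊗ₜ[k] c) + (b ⊗ₜ[k] 1) * D a c)
    (hanti : ∀ a b : Av, D a b = - (TensorProduct.comm k Av Av) (D b a))
    -- S-linearity
    (hlin : ∀ (a : Av) (i : I), D a (E i) = 0)
    -- values on generators: {{x, x*}} = e_{s(x)} ⊗ e_{t(x)}, etc.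
    (hXXs : ∀ e f, D (X e) (Xs f)
        = if e = f then (E (src e)) ⊗ₜ[k] (E (tgt e)) else 0)
    (hXsX : ∀ e f, D (Xs e) (X f)
        = if e = f then -((E (tgt e)) ⊗ₜ[k] (E (src e))) else 0)
    (hXX : ∀ e f, D (X e) (X f) = 0)
    (hXsXs : ∀ e f, D (Xs e) (Xs f) = 0) :
    -- this is a double Poisson bracket ...
    (∀ a b c : Av, tripleBr D a b c = 0) ∧
    -- ... and δ_i = e_i (Σ_x [x,x*]) e_i is a noncommutative moment map
    (∀ (i : I) (a : Av),
      D (E i * (∑ e, (X e * Xs e - Xs e * X e)) * E i) a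
        = ((a * E i) ⊗ₜ[k] (E i)) - ((E i) ⊗ₜ[k] (E i * a))) :=
  doubledQuiver_hamiltonian_general src tgt E hE X Xs hX hXs hgen D hder hanti hlin hXXs hXsX hXX
    hXsXs

end Stmt8
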